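/- Let φ be a rank two Drinfeld module over (L, γ) with [L : F_q] = n, and let T² - A·T + B be the characteristic polynomial of its Frobenius endomorphism τ^n, so that τ^{2n} - φ(A)τ^n + φ(B) = 0 in L⟨τ⟩. Then the polynomial 1 - A + B ∈ F_q[x] annihilates the F_q-linear endomorphism Φ_x = γ(x)·Id + g·π + Δ·π² of L, i.e., (1 - A + B)(Φ_x) = 0. -/

import Mathlib

/-- An abstract model of the skew polynomial ring `L⟨τ⟩` with the commutation rule
`τ u = u ^ q τ`: a ring `S` with a coefficient embedding `C : L →+* S`, a
distinguished element `tau`, and a coefficient function giving, for every element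
of `S`, its (unique, by `indep`) representation as `∑ C (u_i) * tau ^ i`. -/
structure SkewPolyRing (q : ℕ) (L : Type*) [Field L] (S : Type*) [Ring S] where
  C : L →+* S
  tau : S
  tau_comm : ∀ u : L, tau * C u = C (u ^ q) * tau
  coeff : S → (ℕ →₀ L)
  sum_coeff : ∀ U : S, ((coeff U).sum fun i a => C a * tau ^ i) = U
  indep : ∀ f : ℕ →₀ L, ((f.sum fun i a => C a * tau ^ i) = 0) → f = 0

namespace SkewPolyRing

variable {q : ℕ} {L S : Type*} [Field L] [Ring S]

/-- The degree of a skew polynomial (`⊥` for `0`). -/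
noncomputable def degree (P : SkewPolyRing q L S) (U : S) : WithBot ℕ :=
  (P.coeff U).support.max

end SkewPolyRing

/-! The evaluation `ι : L⟨τ⟩ → End_{F_q}(L)`, `τ ↦ π`, is a ring homomorphism because `π` is a
ring endomorphism with `π ∘ u = u ^ q ∘ π`, mirroring `τ u = u ^ q τ`. Since `#L = q ^ n`,
`ι (τ ^ n) = π ^ n = 1`, so `ι` maps the characteristic equation to
`1 - ι (φ A) + ι (φ B) = 0`. Finally `ι ∘ φ` is evaluation of polynomials at `Φ_x = ι (φ x)`,
hence `(1 - A + B)(Φ_x) = 0`. -/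

open Polynomial FiniteField

theorem FiniteField.frobeniusAlgHom_pow_apply {K R : Type*} [Field K] [Fintype K] [CommRing R]
    [Algebra K R] (i : ℕ) (b : R) : (frobeniusAlgHom K R ^ i) b = b ^ Fintype.card K ^ i := by
  rw [AlgHom.coe_pow, coe_frobeniusAlgHom, pow_iterate]

namespace SkewPolyRing

section

variable {q : ℕ} {L S : Type*} [Field L] [Ring S] (P : SkewPolyRing q L S)

theorem coeff_sum (f : ℕ →₀ L) : P.coeff (f.sum fun i a => P.C a * P.tau ^ i) = f := by
  refine sub_eq_zero.mp (P.indep _ ?_)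
  rw [Finsupp.sum_sub_index fun _ _ _ => by rw [map_sub, sub_mul], P.sum_coeff, sub_self]

theorem coeff_C_mul_tau_pow (i : ℕ) (a : L) :
    P.coeff (P.C a * P.tau ^ i) = Finsupp.single i a := by
  simpa using P.coeff_sum (Finsupp.single i a)

theorem coeff_zero : P.coeff 0 = 0 := by
  simpa using P.coeff_C_mul_tau_pow 0 0

theorem coeff_add (U V : S) : P.coeff (U + V) = P.coeff U + P.coeff V := by
  conv_lhs => rw [← P.sum_coeff U, ← P.sum_coeff V]
  rw [← Finsupp.sum_add_index' (fun _ => by simp) fun _ _ _ => by rw [map_add, add_mul],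
    coeff_sum]

theorem tau_pow_mul_C (i : ℕ) (b : L) : P.tau ^ i * P.C b = P.C (b ^ q ^ i) * P.tau ^ i := by
  induction i generalizing b with
  | zero => simp
  | succ i ih =>
    rw [pow_succ', mul_assoc, ih, ← mul_assoc, P.tau_comm, ← pow_mul, ← pow_succ, mul_assoc,
      ← pow_succ']

theorem C_mul_tau_pow_mul_C_mul_tau_pow (i j : ℕ) (a b : L) :
    P.C a * P.tau ^ i * (P.C b * P.tau ^ j) = P.C (a * b ^ q ^ i) * P.tau ^ (i + j) := by
  rw [mul_assoc, ← mul_assoc (P.tau ^ i), tau_pow_mul_C, map_mul, pow_add]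
  noncomm_ring

end

variable {K L S : Type*} [Field K] [Fintype K] [Field L] [Algebra K L] [Ring S]
  (P : SkewPolyRing (Fintype.card K) L S)

variable (K) in
noncomputable def toEndAddHom : S →+ Module.End K L where
  toFun U := (P.coeff U).sum fun i a => a • (frobeniusAlgHom K L ^ i).toLinearMap
  map_zero' := by rw [coeff_zero, Finsupp.sum_zero_index]
  map_add' U V := by
    rw [coeff_add]
    exact Finsupp.sum_add_index' (fun _ => zero_smul _ _) fun _ _ _ => add_smul _ _ _

theorem toEndAddHom_C_mul_tau_pow (i : ℕ) (a : L) :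
    P.toEndAddHom K (P.C a * P.tau ^ i) = a • (frobeniusAlgHom K L ^ i).toLinearMap := by
  simp [toEndAddHom, coeff_C_mul_tau_pow]

theorem toEndAddHom_mul (U V : S) :
    P.toEndAddHom K (U * V) = P.toEndAddHom K U * P.toEndAddHom K V := by
  rw [← P.sum_coeff U, ← P.sum_coeff V, Finsupp.sum_mul, map_finsuppSum, map_finsuppSum,
    Finsupp.sum_mul]
  refine Finsupp.sum_congr fun i _ => ?_
  rw [Finsupp.mul_sum, map_finsuppSum, map_finsuppSum, Finsupp.mul_sum]
  refine Finsupp.sum_congr fun j _ => ?_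
  rw [C_mul_tau_pow_mul_C_mul_tau_pow, toEndAddHom_C_mul_tau_pow, toEndAddHom_C_mul_tau_pow,
    toEndAddHom_C_mul_tau_pow]
  ext w
  simp [frobeniusAlgHom_pow_apply, pow_add, mul_pow, ← pow_mul]
  ring

variable (K) in
/-- The map `ι` of the paper, sending `τ` to the `#K`-power Frobenius `π`. -/
noncomputable def toEnd : S →+* Module.End K L :=
  { P.toEndAddHom K with
    map_one' := by
      show P.toEndAddHom K 1 = 1
      rw [← pow_zero P.tau, ← one_mul (P.tau ^ 0), ← map_one P.C, toEndAddHom_C_mul_tau_pow]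
      exact LinearMap.ext fun _ => one_mul _
    map_mul' := P.toEndAddHom_mul }

theorem toEnd_C_mul_tau_pow (i : ℕ) (a : L) :
    P.toEnd K (P.C a * P.tau ^ i) = a • (frobeniusAlgHom K L ^ i).toLinearMap :=
  P.toEndAddHom_C_mul_tau_pow i a

theorem toEnd_C_apply (a v : L) : P.toEnd K (P.C a) v = a * v := by
  simpa using congr($(P.toEnd_C_mul_tau_pow 0 a) v)

theorem toEnd_tau_pow_apply (i : ℕ) (v : L) :
    P.toEnd K (P.tau ^ i) v = v ^ Fintype.card K ^ i := by
  simpa [frobeniusAlgHom_pow_apply] using congr($(P.toEnd_C_mul_tau_pow i 1) v)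

theorem toEnd_tau_apply (v : L) : P.toEnd K P.tau v = v ^ Fintype.card K := by
  simpa using P.toEnd_tau_pow_apply 1 v

theorem toEnd_tau_pow_finrank [Finite L] : P.toEnd K (P.tau ^ Module.finrank K L) = 1 := by
  rw [← one_mul (P.tau ^ _), ← map_one P.C, toEnd_C_mul_tau_pow, ← orderOf_frobeniusAlgHom K L,
    pow_orderOf_eq_one, one_smul]
  rfl

end SkewPolyRing

theorem Module.End.aeval_apply_eq_sum_range_iterate {R M : Type*} [CommSemiring R]
    [AddCommMonoid M] [Module R M] (f : Module.End R M) (p : R[X]) (v : M) :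
    aeval f p v = ∑ i ∈ Finset.range (p.natDegree + 1), p.coeff i • f^[i] v := by
  simp [aeval_eq_sum_range, LinearMap.sum_apply, Module.End.pow_apply]

theorem one_sub_A_add_B_annihilates_Phi_x_general
    (q n : ℕ) (Fq L S : Type*) [Field Fq] [Fintype Fq] [Field L] [Fintype L]
    [Algebra Fq L] [Ring S]
    (hq : q = Fintype.card Fq) (hn : Module.finrank Fq L = n)
    (P : SkewPolyRing q L S)
    (c g Δ : L)
    (φ : Polynomial Fq →+* S)
    (hconst : ∀ a : Fq, φ (Polynomial.C a) = P.C (algebraMap Fq L a))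
    (hX : φ Polynomial.X = P.C c + P.C g * P.tau + P.C Δ * P.tau ^ 2)
    (A B : Polynomial Fq)
    (hchar : P.tau ^ (2 * n) - φ A * P.tau ^ n + φ B = 0)
    (Φ : L → L) (hΦ : ∀ v : L, Φ v = c * v + g * v ^ q + Δ * v ^ q ^ 2) :
    ∀ v : L, ∑ i ∈ Finset.range ((1 - A + B).natDegree + 1),
      algebraMap Fq L ((1 - A + B).coeff i) * Φ^[i] v = 0 := by
  subst hq hn
  set ψ := (P.toEnd Fq).comp φ
  have hψ : ∀ f, aeval (ψ X) f = ψ f := by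
    refine RingHom.congr_fun (f := (aeval (ψ X)).toRingHom) (ringHom_ext (fun a => ?_) (aeval_X _))
    ext v
    simp [ψ, hconst, SkewPolyRing.toEnd_C_apply, Algebra.smul_def]
  have hΦψ : ⇑(ψ X) = Φ := funext fun v => by
    simp only [ψ, RingHom.comp_apply, hX, hΦ, map_add, map_mul, LinearMap.add_apply,
      Module.End.mul_apply, SkewPolyRing.toEnd_C_apply, SkewPolyRing.toEnd_tau_apply,
      SkewPolyRing.toEnd_tau_pow_apply]
  have hann : aeval (ψ X) (1 - A + B) = 0 := by
    have h := congr(P.toEnd Fq $hchar)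
    rw [pow_mul', map_add, map_sub, map_mul, map_pow, SkewPolyRing.toEnd_tau_pow_finrank,
      one_pow, mul_one, map_zero] at h
    rw [hψ]
    simpa [ψ] using h
  intro v
  have h := (ψ X).aeval_apply_eq_sum_range_iterate (1 - A + B) v
  rw [hann, LinearMap.zero_apply, hΦψ, eq_comm] at h
  simpa only [Algebra.smul_def] using h

/-- if `τ^{2n} - φ(A) τ^n + φ(B) = 0` in `L⟨τ⟩` (with
`deg A ≤ n/2`, `deg B = n`), then the polynomial `1 - A + B ∈ F_q[x]`
annihilates the `F_q`-linear endomorphism `Φ_x = γ(x)·Id + g·π + Δ·π²` of `L`,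
where annihilation is expressed pointwise on `L`. -/
theorem one_sub_A_add_B_annihilates_Phi_x
    (p q n : ℕ) (Fq L S : Type*) [Field Fq] [Fintype Fq] [Field L] [Fintype L]
    [Algebra Fq L] [FiniteDimensional Fq L] [Ring S] (hp : p.Prime) [CharP L p]
    (hq : q = Fintype.card Fq) (hn : Module.finrank Fq L = n)
    (P : SkewPolyRing q L S)
    (c g Δ : L) (hΔ : Δ ≠ 0)
    (γ : Polynomial Fq →+* L) (hc : c = γ Polynomial.X)
    (φ : Polynomial Fq →+* S)
    (hconst : ∀ a : Fq, φ (Polynomial.C a) = P.C (algebraMap Fq L a))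
    (hX : φ Polynomial.X = P.C c + P.C g * P.tau + P.C Δ * P.tau ^ 2)
    (A B : Polynomial Fq) (hA : 2 * A.natDegree ≤ n) (hB : B.natDegree = n)
    (hchar : P.tau ^ (2 * n) - φ A * P.tau ^ n + φ B = 0)
    (Φ : L → L) (hΦ : ∀ v : L, Φ v = c * v + g * v ^ q + Δ * v ^ q ^ 2) :
    ∀ v : L, ∑ i ∈ Finset.range ((1 - A + B).natDegree + 1),
      algebraMap Fq L ((1 - A + B).coeff i) * Φ^[i] v = 0 :=
  one_sub_A_add_B_annihilates_Phi_x_general q n Fq L S hq hn P c g Δ φ hconst hX A B hchar Φ hΦ
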